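/- Let A be a subset of a fuzzy Riesz space X. Then: (i) A ⊆ A^{dd}; (ii) A^d = A^{ddd}; (iii) A^d ∩ A^{dd} = {0}; (iv) if A^d = {0}, then A^{dd} = X; (v) A^d is a fuzzy ideal of X; (vi) if A is a fuzzy ideal of X, then for every nonzero x ∈ A^{dd} there exists a nonzero y ∈ A with μ(|y|,|x|) > 1/2. -/

import Mathlib

/-- A fuzzy Riesz space structure on a real vector space `X`:
a fuzzy order `μ : X × X → [0,1]` compatible with the vector structure,
together with binary suprema and infima with respect to the fuzzy order. -/
structure FuzzyRiesz (X : Type*) [AddCommGroup X] [Module ℝ X] where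
  μ : X → X → ℝ
  nonneg : ∀ x y : X, 0 ≤ μ x y
  le_one : ∀ x y : X, μ x y ≤ 1
  refl : ∀ x : X, μ x x = 1
  antisymm : ∀ x y : X, 1 < μ x y + μ y x → x = y
  trans : ∀ x y z : X, min (μ x y) (μ y z) ≤ μ x z
  add_compat : ∀ x y z : X, 1/2 < μ x y → μ x y ≤ μ (x + z) (y + z)
  smul_compat : ∀ (x y : X) (c : ℝ), 0 ≤ c → 1/2 < μ x y → μ x y ≤ μ (c • x) (c • y)
  sup : X → X → X
  inf : X → X → X
  le_sup_left : ∀ x y : X, 1/2 < μ x (sup x y)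
  le_sup_right : ∀ x y : X, 1/2 < μ y (sup x y)
  sup_le : ∀ x y z : X, 1/2 < μ x z → 1/2 < μ y z → 1/2 < μ (sup x y) z
  inf_le_left : ∀ x y : X, 1/2 < μ (inf x y) x
  inf_le_right : ∀ x y : X, 1/2 < μ (inf x y) y
  le_inf : ∀ x y z : X, 1/2 < μ z x → 1/2 < μ z y → 1/2 < μ z (inf x y)

namespace FuzzyRiesz

universe v

variable {X : Type*} [AddCommGroup X] [Module ℝ X]

/-- The absolute value `|x| = x ∨ (−x)`. -/
def fabs (F : FuzzyRiesz X) (x : X) : X := F.sup x (-x)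

/-- `x` is positive: `μ(0,x) > 1/2`. -/
def Pos (F : FuzzyRiesz X) (x : X) : Prop := 1/2 < F.μ 0 x

/-- `S⁺`, the set of positive elements of `S`. -/
def posPart (F : FuzzyRiesz X) (S : Set X) : Set X := {x ∈ S | F.Pos x}

/-- `y` is an upper bound of `A`. -/
def UpperBound (F : FuzzyRiesz X) (A : Set X) (y : X) : Prop := ∀ x ∈ A, 1/2 < F.μ x y

/-- `y` is a lower bound of `A`. -/
def LowerBound (F : FuzzyRiesz X) (A : Set X) (y : X) : Prop := ∀ x ∈ A, 1/2 < F.μ y x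

/-- `z = sup A` in the fuzzy order. -/
def IsSup (F : FuzzyRiesz X) (A : Set X) (z : X) : Prop :=
  F.UpperBound A z ∧ ∀ y : X, F.UpperBound A y → 1/2 < F.μ z y

/-- `z = inf A` in the fuzzy order. -/
def IsInf (F : FuzzyRiesz X) (A : Set X) (z : X) : Prop :=
  F.LowerBound A z ∧ ∀ y : X, F.LowerBound A y → 1/2 < F.μ y z

/-- `z = inf A`, computed relative to the subset `Y` (lower bounds taken in `Y`). -/
def IsInfIn (F : FuzzyRiesz X) (Y A : Set X) (z : X) : Prop :=
  F.LowerBound A z ∧ ∀ y ∈ Y, F.LowerBound A y → 1/2 < F.μ y z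

/-- A set is fuzzy solid if `μ(|x|,|y|) > 1/2` and `y ∈ A` imply `x ∈ A`. -/
def Solid (F : FuzzyRiesz X) (A : Set X) : Prop :=
  ∀ x y : X, 1/2 < F.μ (F.fabs x) (F.fabs y) → y ∈ A → x ∈ A

/-- A fuzzy ideal: a fuzzy solid vector subspace. -/
structure IsIdeal (F : FuzzyRiesz X) (I : Set X) : Prop where
  zero_mem : (0 : X) ∈ I
  add_mem : ∀ {x y : X}, x ∈ I → y ∈ I → x + y ∈ I
  smul_mem : ∀ (c : ℝ) {x : X}, x ∈ I → c • x ∈ I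
  solid : ∀ x y : X, 1/2 < F.μ (F.fabs x) (F.fabs y) → y ∈ I → x ∈ I

/-- A fuzzy ideal of the subspace `Y` (with the restricted fuzzy order and
vector structure): a vector subspace of `Y` that is solid relative to `Y`. -/
structure IsIdealIn (F : FuzzyRiesz X) (Y I : Set X) : Prop where
  subset : I ⊆ Y
  zero_mem : (0 : X) ∈ I
  add_mem : ∀ {x y : X}, x ∈ I → y ∈ I → x + y ∈ I
  smul_mem : ∀ (c : ℝ) {x : X}, x ∈ I → c • x ∈ I
  solid : ∀ x ∈ Y, ∀ y ∈ I, 1/2 < F.μ (F.fabs x) (F.fabs y) → x ∈ I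

/-- A decreasing net. -/
def Decreasing (F : FuzzyRiesz X) {ι : Type v} [Preorder ι] (y : ι → X) : Prop :=
  ∀ a b : ι, a ≤ b → 1/2 < F.μ (y b) (y a)

/-- An increasing net. -/
def Increasing (F : FuzzyRiesz X) {ι : Type v} [Preorder ι] (x : ι → X) : Prop :=
  ∀ a b : ι, a ≤ b → 1/2 < F.μ (x a) (x b)

/-- The net `x` converges in fuzzy order to `l`: there is a net `y` over the same
index set with `μ(|x_α − l|, y_α) > 1/2` for all `α` and `y_α ↓ 0`. -/
def FuzzyOrderConv (F : FuzzyRiesz X) {ι : Type v} [Preorder ι] (x : ι → X) (l : X) : Prop :=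
  ∃ y : ι → X, (∀ a, 1/2 < F.μ (F.fabs (x a - l)) (y a)) ∧ F.Decreasing y ∧
    F.IsInf (Set.range y) 0

/-- Fuzzy order convergence relative to the subset `Y` (the dominating net lies in `Y`
and its infimum is computed in `Y`). -/
def FuzzyOrderConvIn (F : FuzzyRiesz X) (Y : Set X) {ι : Type v} [Preorder ι]
    (x : ι → X) (l : X) : Prop :=
  ∃ y : ι → X, (∀ a, y a ∈ Y) ∧ (∀ a, 1/2 < F.μ (F.fabs (x a - l)) (y a)) ∧ F.Decreasing y ∧
    F.IsInfIn Y (Set.range y) 0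

/-- `S` is fuzzy σ-order closed: closed under fuzzy order limits of sequences in `S`. -/
def SigmaOrderClosed (F : FuzzyRiesz X) (S : Set X) : Prop :=
  ∀ (x : ℕ → X) (l : X), (∀ n, x n ∈ S) → F.FuzzyOrderConv x l → l ∈ S

/-- `S` is fuzzy order closed: closed under fuzzy order limits of nets in `S`. -/
def OrderClosed (F : FuzzyRiesz X) (S : Set X) : Prop :=
  ∀ (ι : Type v) [Preorder ι] [Nonempty ι] [IsDirected ι (· ≤ ·)],
    ∀ (x : ι → X) (l : X), (∀ a, x a ∈ S) → F.FuzzyOrderConv x l → l ∈ S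

/-- `S` is fuzzy order closed in the subspace `Y`. -/
def OrderClosedIn (F : FuzzyRiesz X) (Y S : Set X) : Prop :=
  ∀ (ι : Type v) [Preorder ι] [Nonempty ι] [IsDirected ι (· ≤ ·)],
    ∀ (x : ι → X) (l : X), (∀ a, x a ∈ S) → l ∈ Y → F.FuzzyOrderConvIn Y x l → l ∈ S

/-- A fuzzy band: a fuzzy order closed fuzzy ideal. -/
def IsBand (F : FuzzyRiesz X) (B : Set X) : Prop := F.IsIdeal B ∧ OrderClosed.{v} F B

/-- A fuzzy band of the subspace `Y`. -/
def IsBandIn (F : FuzzyRiesz X) (Y B : Set X) : Prop := F.IsIdealIn Y B ∧ OrderClosedIn.{v} F Y B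

/-- The disjoint complement `A^d = {x : |x| ∧ |y| = 0 for all y ∈ A}`. -/
def dcomp (F : FuzzyRiesz X) (A : Set X) : Set X :=
  {x : X | ∀ y ∈ A, F.inf (F.fabs x) (F.fabs y) = 0}

/-- The algebraic sum of two subsets. -/
def sumSet (A B : Set X) : Set X := {z : X | ∃ a ∈ A, ∃ b ∈ B, z = a + b}

/-- `S` is fuzzy order dense in `X`. -/
def OrderDense (F : FuzzyRiesz X) (S : Set X) : Prop :=
  ∀ x : X, x ≠ 0 → F.Pos x → ∃ y ∈ S, y ≠ 0 ∧ 1/2 < F.μ y x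

/-- `S` is fuzzy order dense in the subspace `Y`. -/
def OrderDenseIn (F : FuzzyRiesz X) (Y S : Set X) : Prop :=
  ∀ x ∈ Y, x ≠ 0 → F.Pos x → ∃ y ∈ S, y ≠ 0 ∧ 1/2 < F.μ y x

/-- `x` is nonnegative: it is not the case that `μ(x,0) > 1/2`. -/
def Nonneg (F : FuzzyRiesz X) (x : X) : Prop := ¬ (1/2 < F.μ x 0)

/-- `X` is fuzzy Archimedean: for every nonzero nonnegative `x`, the set
`{λ • x : λ > 0}` has no upper bound. -/
def FuzzyArchimedean (F : FuzzyRiesz X) : Prop :=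
  ∀ x : X, x ≠ 0 → F.Nonneg x →
    ¬ ∃ y : X, F.UpperBound {z : X | ∃ c : ℝ, 0 < c ∧ z = c • x} y

/-- `X` is fuzzy Dedekind complete. -/
def DedekindComplete (F : FuzzyRiesz X) : Prop :=
  ∀ A : Set X, A.Nonempty → (∃ y, F.UpperBound A y) → ∃ z, F.IsSup A z

/-- `X` is fuzzy Dedekind σ-complete. -/
def DedekindSigmaComplete (F : FuzzyRiesz X) : Prop :=
  ∀ A : Set X, A.Nonempty → A.Countable →
    ((∃ y, F.UpperBound A y) → ∃ z, F.IsSup A z) ∧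
    ((∃ y, F.LowerBound A y) → ∃ z, F.IsInf A z)

/-- `D` is directed to the right. -/
def DirectedRight (F : FuzzyRiesz X) (D : Set X) : Prop :=
  ∀ E : Set X, E ⊆ D → E.Finite → ∃ d ∈ D, ∀ e ∈ E, 1/2 < F.μ e d

/-- `B` is a fuzzy projection band: a fuzzy band such that every `x ∈ X` decomposes
uniquely as `x = x₁ + x₂` with `x₁ ∈ B`, `x₂ ∈ B^d`. -/
def IsProjBand (F : FuzzyRiesz X) (B : Set X) : Prop :=
  IsBand.{v} F B ∧ ∀ x : X, ∃! p : X × X, p.1 ∈ B ∧ p.2 ∈ F.dcomp B ∧ x = p.1 + p.2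

/-- There is an increasing net of elements of `S`, over some nonempty directed
preordered index set, whose supremum is `l`. -/
def IncNetSup (F : FuzzyRiesz X) (S : Set X) (l : X) : Prop :=
  ∃ (ι : Type v) (r : ι → ι → Prop), Nonempty ι ∧ (∀ a, r a a) ∧
    (∀ a b c, r a b → r b c → r a c) ∧ (∀ a b, ∃ c, r a c ∧ r b c) ∧
    ∃ net : ι → X, (∀ a, net a ∈ S) ∧ (∀ a b, r a b → 1/2 < F.μ (net a) (net b)) ∧
      F.IsSup (Set.range net) l

end FuzzyRiesz

/-!
The `1/2`-cut `x ≤ y ↔ 1/2 < μ x y` of the fuzzy order is a partial order, and the axioms of a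
fuzzy Riesz space say precisely that it makes `X` a lattice-ordered real vector space whose
absolute value is `F.fabs`. The theorem is then a statement about disjoint complements in a
lattice-ordered group. `Aᵈ` is solid, and it is closed under addition because
`(a + b) ⊓ c = b ⊓ c` whenever `a ⊓ c = 0` and `0 ≤ b`; closure under scalars follows from
closure under `n • ·` since `|c • x| ≤ n • |x|` for `n ≥ |c|`. For (vi), a nonzero `x ∈ Aᵈᵈ`
is not in `Aᵈ`, so `|x| ⊓ |z| ≠ 0` for some `z ∈ A`, and this element lies in `A` by solidity.
-/

namespace LatticeOrderedAddCommGroup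

variable {α : Type*} [Lattice α] [AddCommGroup α]

def disjComp (A : Set α) : Set α := {x | ∀ y ∈ A, |x| ⊓ |y| = 0}

variable {A B : Set α} {x : α}

lemma subset_disjComp_disjComp (A : Set α) : A ⊆ disjComp (disjComp A) :=
  fun x hx y hy ↦ by rw [inf_comm]; exact hy x hx

lemma disjComp_anti (h : A ⊆ B) : disjComp B ⊆ disjComp A :=
  fun _ hx y hy ↦ hx y (h hy)

lemma disjComp_disjComp_disjComp (A : Set α) : disjComp (disjComp (disjComp A)) = disjComp A :=
  (disjComp_anti (subset_disjComp_disjComp A)).antisymm (subset_disjComp_disjComp _)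

section OrderedModule

variable {𝕜 : Type*} [Ring 𝕜] [LinearOrder 𝕜] [IsOrderedRing 𝕜] [Module 𝕜 α] [PosSMulMono 𝕜 α]

lemma smul_le_abs_smul_abs (c : 𝕜) (x : α) : c • x ≤ |c| • |x| := by
  rcases le_total 0 c with hc | hc
  · rw [abs_of_nonneg hc]; exact smul_le_smul_of_nonneg_left (le_abs_self x) hc
  · rw [abs_of_nonpos hc, ← neg_smul_neg]
    exact smul_le_smul_of_nonneg_left (neg_le_abs x) (neg_nonneg.2 hc)

lemma abs_smul_le (c : 𝕜) (x : α) : |c • x| ≤ |c| • |x| :=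
  abs_le'.2 ⟨smul_le_abs_smul_abs c x, by
    simpa [← smul_neg] using smul_le_abs_smul_abs c (-x)⟩

end OrderedModule

variable [IsOrderedAddMonoid α]

lemma add_inf_eq_inf_of_inf_eq_zero {a b c : α} (hb : 0 ≤ b) (h : a ⊓ c = 0) :
    (a + b) ⊓ c = b ⊓ c :=
  calc (a + b) ⊓ c = (a + b) ⊓ (c + b) ⊓ c := by
        rw [inf_assoc, inf_eq_right.2 (le_add_of_nonneg_right hb)]
    _ = b ⊓ c := by rw [← inf_add, h, zero_add]

lemma zero_mem_disjComp (A : Set α) : (0 : α) ∈ disjComp A :=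
  fun y _ ↦ by rw [abs_zero]; exact inf_eq_left.2 (abs_nonneg y)

lemma eq_zero_of_mem_of_mem_disjComp (hx : x ∈ A) (hx' : x ∈ disjComp A) : x = 0 :=
  have h : |x| = 0 := by simpa using hx' x hx
  le_antisymm (h ▸ le_abs_self x) (neg_nonpos.1 (h ▸ neg_le_abs x))

lemma disjComp_inter_disjComp_disjComp (A : Set α) :
    disjComp A ∩ disjComp (disjComp A) = {0} :=
  Set.eq_singleton_iff_unique_mem.2
    ⟨⟨zero_mem_disjComp A, zero_mem_disjComp _⟩,
      fun _ hx ↦ eq_zero_of_mem_of_mem_disjComp hx.1 hx.2⟩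

lemma disjComp_zero : disjComp ({0} : Set α) = Set.univ :=
  Set.eq_univ_of_forall fun x y hy ↦ by
    rw [hy, abs_zero]; exact inf_eq_right.2 (abs_nonneg x)

lemma isSolid_disjComp (A : Set α) : IsSolid (disjComp A) :=
  fun _ hx y hyx z hz ↦
    le_antisymm (hx z hz ▸ inf_le_inf_right _ hyx) (le_inf (abs_nonneg y) (abs_nonneg z))

lemma add_mem_disjComp {y : α} (hx : x ∈ disjComp A) (hy : y ∈ disjComp A) :
    x + y ∈ disjComp A := by
  have hsum : |x| + |y| ∈ disjComp A := fun z hz ↦ by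
    rw [abs_of_nonneg (add_nonneg (abs_nonneg x) (abs_nonneg y)),
      add_inf_eq_inf_of_inf_eq_zero (abs_nonneg y) (hx z hz), hy z hz]
  exact isSolid_disjComp A hsum ((abs_add_le x y).trans (le_abs_self _))

lemma nsmul_mem_disjComp (hx : x ∈ disjComp A) (n : ℕ) : n • x ∈ disjComp A := by
  induction n with
  | zero => simpa using zero_mem_disjComp A
  | succ n ih => simpa [succ_nsmul] using add_mem_disjComp ih hx

lemma exists_abs_le_of_mem_disjComp_disjComp (hA : IsSolid A)
    (hx : x ∈ disjComp (disjComp A)) (hx0 : x ≠ 0) : ∃ y ∈ A, y ≠ 0 ∧ |y| ≤ |x| := by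
  have hxA : x ∉ disjComp A := fun h ↦ hx0 (eq_zero_of_mem_of_mem_disjComp h hx)
  obtain ⟨z, hz, hxz⟩ : ∃ z ∈ A, |x| ⊓ |z| ≠ 0 := by simpa [disjComp] using hxA
  have hw : |(|x| ⊓ |z|)| = |x| ⊓ |z| := abs_of_nonneg (le_inf (abs_nonneg x) (abs_nonneg z))
  exact ⟨_, hA hz (hw.trans_le inf_le_right), hxz, hw.trans_le inf_le_left⟩

variable {𝕜 : Type*} [Ring 𝕜] [LinearOrder 𝕜] [IsOrderedRing 𝕜] [Archimedean 𝕜]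
  [Module 𝕜 α] [PosSMulMono 𝕜 α]

lemma smul_mem_disjComp (c : 𝕜) (hx : x ∈ disjComp A) : c • x ∈ disjComp A := by
  have habs : |x| ∈ disjComp A := isSolid_disjComp A hx (abs_abs x).le
  obtain ⟨n, hn⟩ := exists_nat_ge |c|
  refine isSolid_disjComp A (nsmul_mem_disjComp habs n) ?_
  calc |c • x| ≤ |c| • |x| := abs_smul_le c x
    _ ≤ (n : 𝕜) • |x| := smul_le_smul_of_nonneg_right hn (abs_nonneg x)
    _ = n • |x| := Nat.cast_smul_eq_nsmul 𝕜 n |x|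
    _ ≤ abs (n • |x|) := le_abs_self _

end LatticeOrderedAddCommGroup

namespace FuzzyRiesz

variable {X : Type*} [AddCommGroup X] [Module ℝ X]

def Crisp (_F : FuzzyRiesz X) : Type _ := X

variable (F : FuzzyRiesz X)

instance : AddCommGroup F.Crisp := inferInstanceAs (AddCommGroup X)

instance : Module ℝ F.Crisp := inferInstanceAs (Module ℝ X)

instance : Lattice F.Crisp where
  le x y := 1/2 < F.μ x y
  le_refl x := (F.refl x).symm ▸ one_half_lt_one
  le_trans x y z hxy hyz := (lt_min hxy hyz).trans_le (F.trans x y z)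
  le_antisymm x y hxy hyx := F.antisymm x y (by linarith)
  sup := F.sup
  le_sup_left := F.le_sup_left
  le_sup_right := F.le_sup_right
  sup_le := F.sup_le
  inf := F.inf
  inf_le_left := F.inf_le_left
  inf_le_right := F.inf_le_right
  le_inf a b c := F.le_inf b c a

instance : IsOrderedAddMonoid F.Crisp where
  add_le_add_left x y h z := h.trans_le (F.add_compat x y z h)

instance : PosSMulMono ℝ F.Crisp where
  smul_le_smul_of_nonneg_left c hc x y h := h.trans_le (F.smul_compat x y c hc h)

variable {F}

open LatticeOrderedAddCommGroup

lemma IsIdeal.isSolid {I : Set X} (hI : F.IsIdeal I) : IsSolid (α := F.Crisp) I :=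
  fun _ hy _ h ↦ hI.solid _ _ h hy

lemma isIdeal_dcomp (A : Set X) : F.IsIdeal (F.dcomp A) :=
  ⟨zero_mem_disjComp (α := F.Crisp) A, add_mem_disjComp (α := F.Crisp),
    fun c _ hx ↦ smul_mem_disjComp (α := F.Crisp) c hx,
    fun _ _ h hy ↦ isSolid_disjComp (α := F.Crisp) A hy h⟩

end FuzzyRiesz

/-- properties of the disjoint complement of a subset `A`. -/
theorem dcomp_spec {X : Type*} [AddCommGroup X] [Module ℝ X]
    (F : FuzzyRiesz X) (A : Set X) :
    A ⊆ F.dcomp (F.dcomp A) ∧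
    F.dcomp A = F.dcomp (F.dcomp (F.dcomp A)) ∧
    F.dcomp A ∩ F.dcomp (F.dcomp A) = {0} ∧
    (F.dcomp A = {0} → F.dcomp (F.dcomp A) = Set.univ) ∧
    F.IsIdeal (F.dcomp A) ∧
    (F.IsIdeal A → ∀ x ∈ F.dcomp (F.dcomp A), x ≠ 0 →
      ∃ y ∈ A, y ≠ 0 ∧ 1/2 < F.μ (F.fabs y) (F.fabs x)) := by
  open LatticeOrderedAddCommGroup in
  exact ⟨subset_disjComp_disjComp (α := F.Crisp) A,
    (disjComp_disjComp_disjComp (α := F.Crisp) A).symm,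
    disjComp_inter_disjComp_disjComp (α := F.Crisp) A,
    fun h ↦ h ▸ disjComp_zero (α := F.Crisp),
    F.isIdeal_dcomp A,
    fun hA _ hx hx0 ↦ exists_abs_le_of_mem_disjComp_disjComp (α := F.Crisp) hA.isSolid hx hx0⟩
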